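/- Let (A, ⊗, 1) be a tensor extriangulated category with Rad(A) a set. A radical thick tensor ideal P is a meet-prime element of the lattice Rad(A) (i.e., I ∩ J ⊆ P implies I ⊆ P or J ⊆ P for radical thick tensor ideals I, J) if and only if P is a prime thick tensor ideal (i.e., X ⊗ Y ∈ P implies X ∈ P or Y ∈ P for all objects X, Y). -/
import Mathlib


/-! Abstract setting for a tensor extriangulated category, at the level of
isomorphism classes of objects: the classes form a commutative monoid `C` under `⊗`
(with unit `1`), there is a zero object `zero`, a ternary relation `Tri X Y Z`
recording the extriangles `X → Y → Z ⤳`, and a relation `Summand X Y` recording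
that `X` is a direct summand of `Y`. -/

/-- A thick tensor ideal: a set of (iso-classes of) objects containing `0`, closed under
tensoring with arbitrary objects, under direct summands, and satisfying the 2-out-of-3
property with respect to extriangles. -/
structure ThickTensorIdeal (C : Type*) [CommMonoid C] (zero : C)
    (Tri : C → C → C → Prop) (Summand : C → C → Prop) where
  carrier : Set C
  zero_mem : zero ∈ carrier
  tensor_mem : ∀ (a : C) {x : C}, x ∈ carrier → a * x ∈ carrier
  summand_mem : ∀ {x y : C}, Summand x y → y ∈ carrier → x ∈ carrier
  ext₃ : ∀ {X Y Z : C}, Tri X Y Z → X ∈ carrier → Y ∈ carrier → Z ∈ carrier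
  ext₂ : ∀ {X Y Z : C}, Tri X Y Z → X ∈ carrier → Z ∈ carrier → Y ∈ carrier
  ext₁ : ∀ {X Y Z : C}, Tri X Y Z → Y ∈ carrier → Z ∈ carrier → X ∈ carrier

/-- A radical thick tensor ideal: a thick tensor ideal `I` such that `X^{⊗n} ∈ I` for
some `n ≥ 1` implies `X ∈ I`. -/
structure RadicalThickTensorIdeal (C : Type*) [CommMonoid C] (zero : C)
    (Tri : C → C → C → Prop) (Summand : C → C → Prop) extends
    ThickTensorIdeal C zero Tri Summand where
  radical : ∀ {x : C} {n : ℕ}, 1 ≤ n → x ^ n ∈ carrier → x ∈ carrier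

/-- The radical closure `rad(s)` of a set of objects: the intersection of the carriers of
all radical thick tensor ideals containing `s`. -/
def radClosure {C : Type*} [CommMonoid C] (zero : C)
    (Tri : C → C → C → Prop) (Summand : C → C → Prop) (s : Set C) : Set C :=
  ⋂₀ {t : Set C | (∃ I : RadicalThickTensorIdeal C zero Tri Summand, I.carrier = t) ∧ s ⊆ t}

/-- Auxiliary: the quotient ideal `{w | c * w ∈ K}` of a radical thick tensor ideal. -/
def quotIdeal {C : Type*} [CommMonoid C] {zero : C}
    {Tri : C → C → C → Prop} {Summand : C → C → Prop}
    (tensor_zero : ∀ a : C, a * zero = zero)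
    (tri_tensor : ∀ (a : C) {X Y Z : C}, Tri X Y Z → Tri (a * X) (a * Y) (a * Z))
    (summand_tensor : ∀ (a : C) {X Y : C}, Summand X Y → Summand (a * X) (a * Y))
    (K : RadicalThickTensorIdeal C zero Tri Summand) (c : C) :
    RadicalThickTensorIdeal C zero Tri Summand where
  carrier := {w | c * w ∈ K.carrier}
  zero_mem := by simp only [Set.mem_setOf_eq, tensor_zero]; exact K.zero_mem
  tensor_mem := by
    intro a x hx
    have : a * (c * x) ∈ K.carrier := K.tensor_mem a hx
    simpa [mul_left_comm] using this
  summand_mem := by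
    intro x y h hy
    exact K.summand_mem (summand_tensor c h) hy
  ext₃ := fun h hX hY => K.ext₃ (tri_tensor c h) hX hY
  ext₂ := fun h hX hZ => K.ext₂ (tri_tensor c h) hX hZ
  ext₁ := fun h hY hZ => K.ext₁ (tri_tensor c h) hY hZ
  radical := by
    intro x n hn hx
    have h1 : (c * x) ^ n ∈ K.carrier := by
      have : c ^ (n - 1) * (c * x ^ n) ∈ K.carrier := K.tensor_mem _ hx
      have he : (c * x) ^ n = c ^ (n - 1) * (c * x ^ n) := by
        rw [mul_pow, ← mul_assoc, ← pow_succ, Nat.sub_add_cancel hn]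
      rwa [he]
    exact K.radical hn h1

/-- Auxiliary: the radical closure as a radical thick tensor ideal. -/
def radClosureIdeal {C : Type*} [CommMonoid C] (zero : C)
    (Tri : C → C → C → Prop) (Summand : C → C → Prop) (s : Set C) :
    RadicalThickTensorIdeal C zero Tri Summand where
  carrier := radClosure zero Tri Summand s
  zero_mem := fun t ⟨⟨I, hI⟩, _⟩ => hI ▸ I.zero_mem
  tensor_mem := fun a x hx t ht => ht.1.choose_spec ▸
    ht.1.choose.tensor_mem a (by have := hx t ht; rwa [← ht.1.choose_spec] at this)
  summand_mem := fun h hy t ht => ht.1.choose_spec ▸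
    ht.1.choose.summand_mem h (by have := hy t ht; rwa [← ht.1.choose_spec] at this)
  ext₃ := fun h hX hY t ht => ht.1.choose_spec ▸
    ht.1.choose.ext₃ h (by have := hX t ht; rwa [← ht.1.choose_spec] at this)
      (by have := hY t ht; rwa [← ht.1.choose_spec] at this)
  ext₂ := fun h hX hZ t ht => ht.1.choose_spec ▸
    ht.1.choose.ext₂ h (by have := hX t ht; rwa [← ht.1.choose_spec] at this)
      (by have := hZ t ht; rwa [← ht.1.choose_spec] at this)
  ext₁ := fun h hY hZ t ht => ht.1.choose_spec ▸
    ht.1.choose.ext₁ h (by have := hY t ht; rwa [← ht.1.choose_spec] at this)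
      (by have := hZ t ht; rwa [← ht.1.choose_spec] at this)
  radical := fun hn hx t ht => ht.1.choose_spec ▸
    ht.1.choose.radical hn (by have := hx t ht; rwa [← ht.1.choose_spec] at this)

theorem mem_radClosure_self {C : Type*} [CommMonoid C] (zero : C)
    (Tri : C → C → C → Prop) (Summand : C → C → Prop) (s : Set C) {x : C} (hx : x ∈ s) :
    x ∈ radClosure zero Tri Summand s := fun _ ht => ht.2 hx

theorem radClosure_subset {C : Type*} [CommMonoid C] (zero : C)
    (Tri : C → C → C → Prop) (Summand : C → C → Prop) (s : Set C)
    (K : RadicalThickTensorIdeal C zero Tri Summand) (hs : s ⊆ K.carrier) :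
    radClosure zero Tri Summand s ⊆ K.carrier :=
  fun _ hx => hx K.carrier ⟨⟨K, rfl⟩, hs⟩

/-- A radical thick tensor ideal `P` is a meet-prime element of the lattice `Rad(A)`
(ordered by inclusion, with meet given by intersection) if and only if `P` is a prime
thick tensor ideal: `X ⊗ Y ∈ P` implies `X ∈ P` or `Y ∈ P`. -/
theorem stmt_6 {C : Type*} [CommMonoid C] (zero : C)
    (Tri : C → C → C → Prop) (Summand : C → C → Prop)
    (tensor_zero : ∀ a : C, a * zero = zero)
    (tri_tensor : ∀ (a : C) {X Y Z : C}, Tri X Y Z → Tri (a * X) (a * Y) (a * Z))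
    (summand_tensor : ∀ (a : C) {X Y : C}, Summand X Y → Summand (a * X) (a * Y))
    (P : RadicalThickTensorIdeal C zero Tri Summand) :
    (∀ I J : RadicalThickTensorIdeal C zero Tri Summand,
        I.carrier ∩ J.carrier ⊆ P.carrier → I.carrier ⊆ P.carrier ∨ J.carrier ⊆ P.carrier)
      ↔ (∀ X Y : C, X * Y ∈ P.carrier → X ∈ P.carrier ∨ Y ∈ P.carrier) := by
  constructor
  · intro hmeet X Y hXY
    set I := radClosureIdeal zero Tri Summand {X}
    set J := radClosureIdeal zero Tri Summand {Y}
    -- key: rad{X} ∩ rad{Y} ⊆ P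
    have hsub : I.carrier ∩ J.carrier ⊆ P.carrier := by
      rintro Z ⟨hZX, hZY⟩
      -- J_Y := {W | Y * W ∈ P} contains X, hence Z; so Z * Y ∈ P
      have h1 : X ∈ (quotIdeal tensor_zero tri_tensor summand_tensor P Y).carrier := by
        show Y * X ∈ P.carrier; rwa [mul_comm]
      have hZY' : Y * Z ∈ P.carrier :=
        radClosure_subset zero Tri Summand {X} _ (Set.singleton_subset_iff.2 h1) hZX
      -- J_Z := {W | Z * W ∈ P} contains Y, hence Z; so Z * Z ∈ P
      have h2 : Y ∈ (quotIdeal tensor_zero tri_tensor summand_tensor P Z).carrier := by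
        show Z * Y ∈ P.carrier; rwa [mul_comm]
      have hZZ : Z * Z ∈ P.carrier :=
        radClosure_subset zero Tri Summand {Y} _ (Set.singleton_subset_iff.2 h2) hZY
      have : Z ^ 2 ∈ P.carrier := by rwa [pow_two]
      exact P.radical (by norm_num) this
    rcases hmeet I J hsub with h | h
    · exact Or.inl (h (mem_radClosure_self zero Tri Summand {X} rfl))
    · exact Or.inr (h (mem_radClosure_self zero Tri Summand {Y} rfl))
  · intro hprime I J hIJ
    by_cases hI : I.carrier ⊆ P.carrier
    · exact Or.inl hI
    · right
      obtain ⟨x, hxI, hxP⟩ := Set.not_subset.1 hI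
      intro y hy
      have hxy : x * y ∈ I.carrier ∩ J.carrier := by
        constructor
        · rw [mul_comm]; exact I.tensor_mem y hxI
        · exact J.tensor_mem x hy
      rcases hprime x y (hIJ hxy) with h | h
      · exact absurd h hxP
      · exact h
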